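/- Let [b_1,...,b_ℓ] be a T-string and (a_1,...,a_ℓ) the discrepancies, i.e., the unique solution to b_j − 2 = a_{j−1} − a_j b_j + a_{j+1} (a_0 = a_{ℓ+1} = 0). Then −1 < a_j < 0 for every j. -/
import Mathlib


/-- The operation `L[b₁,…,b_ℓ] = [2, b₁, …, b_{ℓ-1}, b_ℓ + 1]`. -/
def Lop (l : List ℤ) : List ℤ := 2 :: (l.dropLast ++ [l.getLast! + 1])

/-- The operation `R[b₁,…,b_ℓ] = [b₁+1, b₂, …, b_ℓ, 2]`. -/
def Rop : List ℤ → List ℤ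
  | [] => []
  | a :: t => (a + 1) :: (t ++ [2])

/-- T-strings: generated from `[4]` by the operations `L` and `R`. -/
inductive TString : List ℤ → Prop
  | base : TString [4]
  | left {l : List ℤ} : TString l → TString (Lop l)
  | right {l : List ℤ} : TString l → TString (Rop l)


lemma TString.ne_nil {l : List ℤ} (h : TString l) : l ≠ [] := by
  induction h with
  | base => simp
  | left h ih => simp [Lop]
  | @right l h ih =>
    match l with
    | [] => exact absurd rfl ih
    | a :: t => simp [Rop]

lemma getLast!_eq {l : List ℤ} (h : l ≠ []) : l.getLast! = l.getLast h :=
  List.getLast!_of_getLast? (List.getLast?_eq_getLast_of_ne_nil h)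

lemma Lop_length {l : List ℤ} (h : l ≠ []) : (Lop l).length = l.length + 1 := by
  have : 1 ≤ l.length := List.length_pos_iff.mpr h
  simp [Lop]; omega

lemma Rop_length {l : List ℤ} (h : l ≠ []) : (Rop l).length = l.length + 1 := by
  match l with
  | a :: t => simp [Rop]

lemma getD_Lop_zero (l : List ℤ) : (Lop l).getD 0 0 = 2 := rfl

lemma getD_Lop_mid {l : List ℤ} {i : ℕ} (h1 : 1 ≤ i) (h2 : i < l.length) :
    (Lop l).getD i 0 = l.getD (i - 1) 0 := by
  obtain ⟨k, rfl⟩ : ∃ k, i = k + 1 := ⟨i - 1, by omega⟩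
  have hk : k < l.dropLast.length := by simp; omega
  have hk' : k < l.length := by omega
  simp only [Lop, List.getD_cons_succ, Nat.add_sub_cancel]
  rw [List.getD_append _ _ _ _ hk, List.getD_eq_getElem _ _ hk,
    List.getElem_dropLast, List.getD_eq_getElem _ _ hk']

lemma getD_Lop_last {l : List ℤ} (h : l ≠ []) :
    (Lop l).getD l.length 0 = l.getD (l.length - 1) 0 + 1 := by
  have h1 : 1 ≤ l.length := List.length_pos_iff.mpr h
  obtain ⟨k, hk⟩ : ∃ k, l.length = k + 1 := ⟨l.length - 1, by omega⟩
  have hd : l.dropLast.length = k := by simp [hk]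
  simp only [Lop, hk, List.getD_cons_succ]
  rw [List.getD_append_right _ _ _ _ (by omega), hd, Nat.sub_self,
    List.getD_cons_zero, getLast!_eq h, List.getLast_eq_getElem,
    List.getD_eq_getElem _ _ (by omega)]
  congr 1
  simp [hk]

lemma getD_Rop_zero {l : List ℤ} (h : l ≠ []) :
    (Rop l).getD 0 0 = l.getD 0 0 + 1 := by
  match l with
  | a :: t => simp [Rop]

lemma getD_Rop_mid {l : List ℤ} {i : ℕ} (h1 : 1 ≤ i) (h2 : i < l.length) :
    (Rop l).getD i 0 = l.getD i 0 := by
  match l with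
  | a :: t =>
    obtain ⟨k, rfl⟩ : ∃ k, i = k + 1 := ⟨i - 1, by omega⟩
    have hk : k < t.length := by simp at h2; omega
    simp only [Rop, List.getD_cons_succ]
    rw [List.getD_append _ _ _ _ hk]

lemma getD_Rop_last {l : List ℤ} (h : l ≠ []) :
    (Rop l).getD l.length 0 = 2 := by
  match l with
  | a :: t =>
    simp only [Rop, List.length_cons, List.getD_cons_succ]
    rw [List.getD_append_right _ _ _ _ (by omega), Nat.sub_self, List.getD_cons_zero]

lemma TString.two_le {l : List ℤ} (h : TString l) : ∀ x ∈ l, 2 ≤ x := by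
  induction h with
  | base => simp
  | @left l h ih =>
    intro x hx
    simp only [Lop, List.mem_cons, List.mem_append, List.mem_singleton] at hx
    rcases hx with rfl | hx | rfl | hmem
    · norm_num
    · exact ih x (List.dropLast_subset l hx)
    · have hne := h.ne_nil
      have : l.getLast hne ∈ l := List.getLast_mem hne
      have := ih _ this
      rw [getLast!_eq hne]; omega
    · simp at hmem
  | @right l h ih =>
    match l with
    | [] => exact absurd rfl h.ne_nil
    | a :: t =>
      intro x hx
      simp only [Rop, List.mem_cons, List.mem_append, List.mem_singleton] at hx
      rcases hx with rfl | hx | rfl | hmem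
      · have := ih a (by simp); omega
      · exact ih x (by simp [hx])
      · norm_num
      · simp at hmem

lemma grow (b d : ℕ → ℚ) (n : ℕ) (hb : ∀ j, 1 ≤ j → j ≤ n → 2 ≤ b j)
    (h0 : d 0 = 0) (h1 : 0 < d 1)
    (hrec : ∀ j, 1 ≤ j → j ≤ n → d (j + 1) = b j * d j - d (j - 1)) :
    0 < d (n + 1) := by
  have key : ∀ k, k ≤ n → 0 < d (k + 1) ∧ d k < d (k + 1) := by
    intro k
    induction k with
    | zero => intro _; exact ⟨h1, by rw [h0]; exact h1⟩
    | succ m ihm =>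
      intro hm
      obtain ⟨hp, hlt⟩ := ihm (by omega)
      have hr := hrec (m + 1) (by omega) hm
      have hb' := hb (m + 1) (by omega) hm
      simp only [Nat.add_sub_cancel] at hr
      constructor <;> nlinarith
  exact (key n le_rfl).1

lemma allzero (b d : ℕ → ℚ) (n : ℕ)
    (h0 : d 0 = 0) (h1 : d 1 = 0)
    (hrec : ∀ j, 1 ≤ j → j ≤ n → d (j + 1) = b j * d j - d (j - 1)) :
    ∀ k, k ≤ n + 1 → d k = 0 := by
  have key : ∀ k, k ≤ n → d k = 0 ∧ d (k + 1) = 0 := by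
    intro k
    induction k with
    | zero => intro _; exact ⟨h0, h1⟩
    | succ m ihm =>
      intro hm
      obtain ⟨hz, hz'⟩ := ihm (by omega)
      refine ⟨hz', ?_⟩
      have hr := hrec (m + 1) (by omega) hm
      simp only [Nat.add_sub_cancel] at hr
      rw [hr, hz, hz']; ring
  intro k hk
  rcases Nat.lt_or_ge k (n + 1) with h | h
  · exact (key k (by omega)).1
  · have : k = n + 1 := by omega
    rw [this]
    rcases Nat.eq_zero_or_pos n with rfl | hn
    · exact h1
    · exact (key n le_rfl).2

lemma unique_sol (l : List ℤ) (hb2 : ∀ i, i < l.length → 2 ≤ l.getD i 0)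
    (a a' : ℕ → ℚ)
    (ha0 : a 0 = 0) (haend : a (l.length + 1) = 0)
    (hsys : ∀ j : ℕ, 1 ≤ j → j ≤ l.length →
      ((l.getD (j - 1) 0 : ℤ) : ℚ) - 2 =
        a (j - 1) - a j * ((l.getD (j - 1) 0 : ℤ) : ℚ) + a (j + 1))
    (ha0' : a' 0 = 0) (haend' : a' (l.length + 1) = 0)
    (hsys' : ∀ j : ℕ, 1 ≤ j → j ≤ l.length →
      ((l.getD (j - 1) 0 : ℤ) : ℚ) - 2 =
        a' (j - 1) - a' j * ((l.getD (j - 1) 0 : ℤ) : ℚ) + a' (j + 1)) :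
    ∀ k, k ≤ l.length + 1 → a k = a' k := by
  set b : ℕ → ℚ := fun j => ((l.getD (j - 1) 0 : ℤ) : ℚ) with hbdef
  set d : ℕ → ℚ := fun j => a j - a' j with hddef
  have hb : ∀ j, 1 ≤ j → j ≤ l.length → 2 ≤ b j := by
    intro j h1 h2
    have := hb2 (j - 1) (by omega)
    simp only [hbdef]
    exact_mod_cast by exact_mod_cast this
  have hd0 : d 0 = 0 := by simp [hddef, ha0, ha0']
  have hdend : d (l.length + 1) = 0 := by simp [hddef, haend, haend']
  have hrec : ∀ j, 1 ≤ j → j ≤ l.length → d (j + 1) = b j * d j - d (j - 1) := by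
    intro j h1 h2
    have e1 := hsys j h1 h2
    have e2 := hsys' j h1 h2
    simp only [hddef, hbdef]
    linarith
  have hd1 : d 1 = 0 := by
    rcases lt_trichotomy (d 1) 0 with h | h | h
    · exfalso
      have := grow b (fun j => -(d j)) l.length hb (by simp [hd0]) (by simpa using h)
        (by intro j hj1 hj2; have := hrec j hj1 hj2; simp; linarith)
      simp [hdend] at this
    · exact h
    · exfalso
      have := grow b d l.length hb hd0 h hrec
      rw [hdend] at this
      exact lt_irrefl 0 this
  intro k hk
  have := allzero b d l.length hd0 hd1 hrec k hk
  simp only [hddef] at this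
  linarith

lemma exists_good (l : List ℤ) (h : TString l) :
    ∃ A : ℕ → ℚ, A 0 = 0 ∧ (∀ j, l.length + 1 ≤ j → A j = 0) ∧
      (∀ j : ℕ, 1 ≤ j → j ≤ l.length →
        ((l.getD (j - 1) 0 : ℤ) : ℚ) - 2 =
          A (j - 1) - A j * ((l.getD (j - 1) 0 : ℤ) : ℚ) + A (j + 1)) ∧
      (∀ j, 1 ≤ j → j ≤ l.length → -1 < A j ∧ A j < 0) ∧
      A 1 + A l.length = -1 := by
  induction h with
  | base =>
    refine ⟨fun j => if j = 1 then -1/2 else 0, by norm_num, ?_, ?_, ?_, by norm_num⟩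
    · intro j hj
      simp only [List.length_singleton] at hj
      simp only [if_neg (by omega : ¬ j = 1)]
    · intro j h1 h2
      simp only [List.length_singleton] at h2
      have : j = 1 := by omega
      subst this
      norm_num
    · intro j h1 h2
      simp only [List.length_singleton] at h2
      have : j = 1 := by omega
      subst this
      norm_num
  | @left l hT ih =>
    obtain ⟨A, hA0, hAz, hAsys, hAbd, hAinv⟩ := ih
    have hne := hT.ne_nil
    have hl1 : 1 ≤ l.length := List.length_pos_iff.mpr hne
    set n := l.length with hn
    obtain ⟨hm1, hm2⟩ := hAbd n hl1 le_rfl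
    set D : ℚ := 2 + A n with hD
    have hD0 : 0 < D := by rw [hD]; linarith
    have hDne : D ≠ 0 := ne_of_gt hD0
    set B : ℕ → ℚ := fun j => if 1 ≤ j ∧ j ≤ n + 1 then (A (j - 1) - 1 - A n) / D else 0
      with hBdef
    have hBin : ∀ j, 1 ≤ j → j ≤ n + 1 → B j = (A (j - 1) - 1 - A n) / D := by
      intro j h1 h2; simp only [hBdef]; rw [if_pos ⟨h1, h2⟩]
    have hBout : ∀ j, n + 2 ≤ j → B j = 0 := by
      intro j hj; simp only [hBdef]; rw [if_neg (by omega)]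
    have hB0 : B 0 = 0 := by simp only [hBdef]; rw [if_neg (by omega)]
    have hLlen : (Lop l).length = n + 1 := Lop_length hne
    rw [hLlen]
    refine ⟨B, hB0, fun j hj => hBout j (by omega), ?_, ?_, ?_⟩
    · intro j h1 h2
      rcases eq_or_lt_of_le h1 with h1e | h1lt
      · -- j = 1
        rw [← h1e]
        simp only [Nat.sub_self]
        rw [getD_Lop_zero, hB0, hBin 1 le_rfl (by omega), hBin 2 (by omega) (by omega)]
        simp only [Nat.sub_self, Nat.add_sub_cancel, hA0]
        push_cast
        rw [show (0:ℚ) - (0 - 1 - A n) / D * 2 + (A 1 - 1 - A n) / D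
            = (0 - (0 - 1 - A n) * 2 + (A 1 - 1 - A n)) / D from by ring, eq_div_iff hDne]
        linear_combination -hAinv
      · rcases eq_or_lt_of_le h2 with h2e | h2lt
        · -- j = n + 1
          obtain ⟨m, hm⟩ : ∃ m, n = m + 1 := ⟨n - 1, by omega⟩
          subst h2e
          have hgd : (Lop l).getD (n + 1 - 1) 0 = l.getD (n - 1) 0 + 1 := by
            simpa using getD_Lop_last hne
          rw [hgd]
          simp only [Nat.add_sub_cancel]
          rw [hBin (n + 1) (by omega) le_rfl, hBin n (by omega) (by omega),
            hBout (n + 2) le_rfl]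
          simp only [Nat.add_sub_cancel]
          have e := hAsys n hl1 le_rfl
          rw [hAz (n + 1) le_rfl] at e
          set x : ℚ := ((l.getD (n - 1) 0 : ℤ) : ℚ) with hx
          push_cast
          rw [show (A (n - 1) - 1 - A n) / D - (A n - 1 - A n) / D * (x + 1) + 0
              = ((A (n - 1) - 1 - A n) - (A n - 1 - A n) * (x + 1) + 0) / D from by ring,
            eq_div_iff hDne]
          linear_combination e
        · -- 2 ≤ j ≤ n
          obtain ⟨k, rfl⟩ : ∃ k, j = k + 2 := ⟨j - 2, by omega⟩
          have hgd : (Lop l).getD (k + 2 - 1) 0 = l.getD (k + 1 - 1) 0 := by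
            exact getD_Lop_mid (by omega) (by omega)
          rw [hgd]
          simp only [Nat.add_sub_cancel, show k + 2 - 1 = k + 1 from rfl,
            show k + 2 + 1 = k + 3 from rfl]
          rw [hBin (k + 1) (by omega) (by omega), hBin (k + 2) (by omega) (by omega),
            hBin (k + 3) (by omega) (by omega)]
          simp only [Nat.add_sub_cancel, show k + 2 - 1 = k + 1 from rfl,
            show k + 3 - 1 = k + 2 from rfl]
          have e := hAsys (k + 1) (by omega) (by omega)
          simp only [Nat.add_sub_cancel, show k + 1 + 1 = k + 2 from rfl] at e
          set x : ℚ := ((l.getD k 0 : ℤ) : ℚ)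
          rw [show (A k - 1 - A n) / D - (A (k + 1) - 1 - A n) / D * x
              + (A (k + 2) - 1 - A n) / D
              = ((A k - 1 - A n) - (A (k + 1) - 1 - A n) * x + (A (k + 2) - 1 - A n)) / D
            from by ring, eq_div_iff hDne]
          linear_combination e
    · intro j h1 h2
      rw [hBin j h1 h2]
      have hnum : -1 < A (j - 1) ∧ A (j - 1) ≤ 0 := by
        rcases eq_or_lt_of_le h1 with h1e | h1lt
        · rw [← h1e]; simp [hA0]
        · obtain ⟨b1, b2⟩ := hAbd (j - 1) (by omega) (by omega)
          exact ⟨b1, le_of_lt b2⟩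
      constructor
      · rw [lt_div_iff₀ hD0]
        rw [hD]; nlinarith [hnum.1]
      · apply div_neg_of_neg_of_pos _ hD0
        linarith [hnum.2, hm1]
    · rw [hBin 1 le_rfl (by omega), hBin (n + 1) (by omega) le_rfl]
      simp only [Nat.sub_self, Nat.add_sub_cancel, hA0]
      field_simp
      ring
  | @right l hT ih =>
    obtain ⟨A, hA0, hAz, hAsys, hAbd, hAinv⟩ := ih
    have hne := hT.ne_nil
    have hl1 : 1 ≤ l.length := List.length_pos_iff.mpr hne
    set n := l.length with hn
    obtain ⟨hm1, hm2⟩ := hAbd 1 le_rfl hl1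
    set D : ℚ := 2 + A 1 with hD
    have hD0 : 0 < D := by rw [hD]; linarith
    have hDne : D ≠ 0 := ne_of_gt hD0
    set B : ℕ → ℚ := fun j => if 1 ≤ j ∧ j ≤ n + 1 then (A j - 1 - A 1) / D else 0
      with hBdef
    have hBin : ∀ j, 1 ≤ j → j ≤ n + 1 → B j = (A j - 1 - A 1) / D := by
      intro j h1 h2; simp only [hBdef]; rw [if_pos ⟨h1, h2⟩]
    have hBout : ∀ j, n + 2 ≤ j → B j = 0 := by
      intro j hj; simp only [hBdef]; rw [if_neg (by omega)]
    have hB0 : B 0 = 0 := by simp only [hBdef]; rw [if_neg (by omega)]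
    have hRlen : (Rop l).length = n + 1 := Rop_length hne
    rw [hRlen]
    refine ⟨B, hB0, fun j hj => hBout j (by omega), ?_, ?_, ?_⟩
    · intro j h1 h2
      rcases eq_or_lt_of_le h1 with h1e | h1lt
      · -- j = 1
        rw [← h1e]
        simp only [Nat.sub_self]
        rw [getD_Rop_zero hne, hB0, hBin 1 le_rfl (by omega), hBin 2 (by omega) (by omega)]
        have e := hAsys 1 le_rfl hl1
        simp only [Nat.sub_self, hA0] at e
        set x : ℚ := ((l.getD 0 0 : ℤ) : ℚ)
        push_cast
        rw [show (0:ℚ) - (A 1 - 1 - A 1) / D * (x + 1) + (A 2 - 1 - A 1) / D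
            = (0 - (A 1 - 1 - A 1) * (x + 1) + (A 2 - 1 - A 1)) / D from by ring,
          eq_div_iff hDne]
        linear_combination e
      · rcases eq_or_lt_of_le h2 with h2e | h2lt
        · -- j = n + 1
          subst h2e
          have hgd : (Rop l).getD (n + 1 - 1) 0 = 2 := by
            simpa using getD_Rop_last hne
          rw [hgd]
          simp only [Nat.add_sub_cancel]
          rw [hBin (n + 1) (by omega) le_rfl, hBin n (by omega) (by omega),
            hBout (n + 2) le_rfl]
          rw [hAz (n + 1) le_rfl]
          push_cast
          rw [show (A n - 1 - A 1) / D - (0 - 1 - A 1) / D * 2 + 0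
              = ((A n - 1 - A 1) - (0 - 1 - A 1) * 2 + 0) / D from by ring,
            eq_div_iff hDne]
          linear_combination -hAinv
        · -- 2 ≤ j ≤ n
          obtain ⟨k, rfl⟩ : ∃ k, j = k + 2 := ⟨j - 2, by omega⟩
          have hgd : (Rop l).getD (k + 2 - 1) 0 = l.getD (k + 2 - 1) 0 := by
            exact getD_Rop_mid (by omega) (by omega)
          rw [hgd]
          simp only [show k + 2 - 1 = k + 1 from rfl, show k + 2 + 1 = k + 3 from rfl]
          rw [hBin (k + 1) (by omega) (by omega), hBin (k + 2) (by omega) (by omega),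
            hBin (k + 3) (by omega) (by omega)]
          have e := hAsys (k + 2) (by omega) (by omega)
          simp only [show k + 2 - 1 = k + 1 from rfl, show k + 2 + 1 = k + 3 from rfl] at e
          set x : ℚ := ((l.getD (k + 1) 0 : ℤ) : ℚ)
          rw [show (A (k + 1) - 1 - A 1) / D - (A (k + 2) - 1 - A 1) / D * x
              + (A (k + 3) - 1 - A 1) / D
              = ((A (k + 1) - 1 - A 1) - (A (k + 2) - 1 - A 1) * x + (A (k + 3) - 1 - A 1)) / D
            from by ring, eq_div_iff hDne]
          linear_combination e
    · intro j h1 h2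
      rw [hBin j h1 h2]
      have hnum : -1 < A j ∧ A j ≤ 0 := by
        rcases eq_or_lt_of_le h2 with h2e | h2lt
        · rw [h2e, hAz (n + 1) le_rfl]; norm_num
        · obtain ⟨b1, b2⟩ := hAbd j h1 (by omega)
          exact ⟨b1, le_of_lt b2⟩
      constructor
      · rw [lt_div_iff₀ hD0]
        rw [hD]; nlinarith [hnum.1]
      · apply div_neg_of_neg_of_pos _ hD0
        linarith [hnum.2, hm1]
    · rw [hBin 1 le_rfl (by omega), hBin (n + 1) (by omega) le_rfl]
      rw [hAz (n + 1) le_rfl]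
      field_simp
      ring

/-- Log terminality: the discrepancies `aⱼ` of a T-string `[b₁,…,b_ℓ]`,
i.e. the solution of `bⱼ - 2 = a_{j-1} - aⱼ bⱼ + a_{j+1}` (with
`a₀ = a_{ℓ+1} = 0`), satisfy `-1 < aⱼ < 0` for every `1 ≤ j ≤ ℓ`. -/
theorem discrepancy_log_terminal (l : List ℤ) (h : TString l) (a : ℕ → ℚ)
    (ha0 : a 0 = 0) (haend : a (l.length + 1) = 0)
    (hsys : ∀ j : ℕ, 1 ≤ j → j ≤ l.length →
      ((l.getD (j - 1) 0 : ℤ) : ℚ) - 2 =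
        a (j - 1) - a j * ((l.getD (j - 1) 0 : ℤ) : ℚ) + a (j + 1)) :
    ∀ j : ℕ, 1 ≤ j → j ≤ l.length → -1 < a j ∧ a j < 0 := by

  obtain ⟨A, hA0, hAz, hAsys, hAbd, _⟩ := exists_good l h
  have hb2 : ∀ i, i < l.length → 2 ≤ l.getD i 0 := by
    intro i hi
    rw [List.getD_eq_getElem _ _ hi]
    exact h.two_le _ (List.getElem_mem hi)
  have huniq := unique_sol l hb2 a A ha0 haend hsys hA0 (hAz _ le_rfl) hAsys
  intro j h1 h2
  rw [huniq j (by omega)]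
  exact hAbd j h1 h2
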